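/- If γ^{n+1} < κ d_{μ,min} min_s( i(s) d_μ(s) ) / ( d_{μ,max}² ‖I − γP_π^⊤‖_∞ ‖m‖₁ ), where κ := min_s d_μ(s) i(s) / f(s), the feature matrix X has full column rank, and w_{*,n} satisfies Π_{f_n} T_π (X w_{*,n}) = X w_{*,n}, then ‖X w_{*,n} − v_π‖_{f_n} ≤ (1/√(1−γ)) ‖Π_{f_n} v_π − v_π‖_{f_n}, where v_π := (I − γP_π)^{-1} r_π is the value function of the target policy (the unique fixed point of T_π). -/

import Mathlib

open Matrix Finset

noncomputable section

/-- The truncated emphasis `m_n := Σ_{j=0}^n γ^j D_μ⁻¹ (P_π^⊤)^j D_μ i`. -/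
def truncEmph {S : Type} [Fintype S] [DecidableEq S]
    (γ : ℝ) (P : Matrix S S ℝ) (d i : S → ℝ) (n : ℕ) : S → ℝ :=
  fun s => ∑ j ∈ Finset.range (n + 1),
    γ ^ j * ((Matrix.diagonal fun s => (d s)⁻¹) * (Pᵀ) ^ j * Matrix.diagonal d).mulVec i s

/-- The emphasis `m := D_μ⁻¹ (I − γ P_π^⊤)⁻¹ D_μ i`. -/
def emph {S : Type} [Fintype S] [DecidableEq S]
    (γ : ℝ) (P : Matrix S S ℝ) (d i : S → ℝ) : S → ℝ :=
  ((Matrix.diagonal fun s => (d s)⁻¹) * (1 - γ • Pᵀ)⁻¹ * Matrix.diagonal d).mulVec i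

/-!
With `b = D_μ i`, the weighting `f_n = ∑_{j ≤ n} γ^j b P^j` satisfies the telescoping identity
`γ f_n P + b = f_n + γ^(n+1) b P^(n+1)`, and the truncation condition makes the last term at most
`b`, so `γ f_n P ≤ f_n`. By Jensen's inequality this makes `T_π` a `√γ`-contraction in `‖·‖_{f_n}`.
The weighted least-squares residual is orthogonal to the column space, so for the projected fixed
point `x = Π T_π x` Pythagoras and non-expansiveness of `Π` give
`‖x - v_π‖² = ‖x - Π v_π‖² + ‖Π v_π - v_π‖² ≤ γ ‖x - v_π‖² + ‖Π v_π - v_π‖²`.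
-/

section RowStochastic

variable {S : Type*} [Fintype S] [DecidableEq S] {P : Matrix S S ℝ} {γ : ℝ}

lemma le_mulVec_of_forall_le (hP : P ∈ rowStochastic ℝ S) {x : S → ℝ} {t : S}
    (ht : ∀ s, x t ≤ x s) : x t ≤ (P *ᵥ x) t :=
  calc x t = ∑ s, P t s * x t := by rw [← sum_mul, sum_row_of_mem_rowStochastic hP, one_mul]
    _ ≤ ∑ s, P t s * x s :=
      sum_le_sum fun s _ => mul_le_mul_of_nonneg_left (ht s) (nonneg_of_mem_rowStochastic hP)

lemma one_sub_smul_mulVec (P : Matrix S S ℝ) (γ : ℝ) (x : S → ℝ) :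
    (1 - γ • P) *ᵥ x = x - γ • (P *ᵥ x) := by
  rw [sub_mulVec, one_mulVec, smul_mulVec]

/-- Minimum principle: at a minimum `t` of `x`, `x t ≥ γ (P x) t ≥ γ x t`. -/
lemma nonneg_of_one_sub_smul_mulVec_nonneg (hP : P ∈ rowStochastic ℝ S) (hγ0 : 0 ≤ γ)
    (hγ1 : γ < 1) {x : S → ℝ} (hx : 0 ≤ (1 - γ • P) *ᵥ x) : 0 ≤ x := by
  intro s
  have : Nonempty S := ⟨s⟩
  obtain ⟨t, ht⟩ := Finite.exists_min x
  have hPx := mul_le_mul_of_nonneg_left (le_mulVec_of_forall_le hP ht) hγ0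
  have hxt := hx t
  rw [one_sub_smul_mulVec] at hxt
  simp only [Pi.zero_apply, Pi.sub_apply, Pi.smul_apply, smul_eq_mul] at hxt
  have : 0 ≤ x t := by nlinarith
  exact this.trans (ht s)

lemma isUnit_one_sub_smul (hP : P ∈ rowStochastic ℝ S) (hγ0 : 0 ≤ γ) (hγ1 : γ < 1) :
    IsUnit (1 - γ • P) := by
  rw [← mulVec_injective_iff_isUnit]
  intro x y hxy
  have hz : (1 - γ • P) *ᵥ (x - y) = 0 := by rw [mulVec_sub, hxy, sub_self]
  have h₁ := nonneg_of_one_sub_smul_mulVec_nonneg hP hγ0 hγ1 hz.ge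
  have h₂ := nonneg_of_one_sub_smul_mulVec_nonneg hP hγ0 hγ1 (x := -(x - y))
    (by rw [mulVec_neg, hz, neg_zero])
  exact sub_eq_zero.1 (le_antisymm (neg_nonneg.1 h₂) h₁)

lemma inv_one_sub_smul_nonneg (hP : P ∈ rowStochastic ℝ S) (hγ0 : 0 ≤ γ) (hγ1 : γ < 1)
    (s t : S) : 0 ≤ (1 - γ • P)⁻¹ s t := by
  have hdet := (isUnit_iff_isUnit_det _).1 (isUnit_one_sub_smul hP hγ0 hγ1)
  have := nonneg_of_one_sub_smul_mulVec_nonneg hP hγ0 hγ1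
    (x := (1 - γ • P)⁻¹ *ᵥ Pi.single t 1)
    (by rw [mulVec_mulVec, mul_nonsing_inv _ hdet, one_mulVec]
        exact Pi.single_nonneg.2 zero_le_one) s
  simpa [mulVec_single_one] using this

lemma one_sub_smul_transpose_mulVec_inv_mulVec (hP : P ∈ rowStochastic ℝ S) (hγ0 : 0 ≤ γ)
    (hγ1 : γ < 1) (b : S → ℝ) : (1 - γ • Pᵀ) *ᵥ ((1 - γ • Pᵀ)⁻¹ *ᵥ b) = b := by
  have hdet : IsUnit (1 - γ • Pᵀ).det := by
    rw [← transpose_one, ← transpose_smul, ← transpose_sub, det_transpose,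
      ← isUnit_iff_isUnit_det]
    exact isUnit_one_sub_smul hP hγ0 hγ1
  rw [mulVec_mulVec, mul_nonsing_inv _ hdet, one_mulVec]

lemma le_inv_one_sub_smul_transpose_mulVec (hP : P ∈ rowStochastic ℝ S) (hγ0 : 0 ≤ γ)
    (hγ1 : γ < 1) {b : S → ℝ} (hb : 0 ≤ b) : b ≤ (1 - γ • Pᵀ)⁻¹ *ᵥ b := by
  set y := (1 - γ • Pᵀ)⁻¹ *ᵥ b with hy
  have hy0 : 0 ≤ y := by
    intro t
    rw [hy, ← transpose_one, ← transpose_smul, ← transpose_sub, ← transpose_nonsing_inv,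
      mulVec_transpose]
    exact sum_nonneg fun s _ => mul_nonneg (hb s) (inv_one_sub_smul_nonneg hP hγ0 hγ1 s t)
  have hb_eq : b = y - γ • (Pᵀ *ᵥ y) := by
    rw [← one_sub_smul_mulVec, hy, one_sub_smul_transpose_mulVec_inv_mulVec hP hγ0 hγ1]
  have hPy : 0 ≤ Pᵀ *ᵥ y := by
    rw [mulVec_transpose]
    exact nonneg_vecMul_of_mem_rowStochastic hP hy0
  rw [hb_eq]
  exact sub_le_self _ (smul_nonneg hγ0 hPy)

end RowStochastic

section TruncatedWeight

variable {S : Type*} [Fintype S] [DecidableEq S]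

lemma smul_sum_vecMul_pow_add (γ : ℝ) (P : Matrix S S ℝ) (b : S → ℝ) (n : ℕ) :
    γ • ((∑ j ∈ range (n + 1), γ ^ j • (b ᵥ* P ^ j)) ᵥ* P) + b =
      ∑ j ∈ range (n + 1), γ ^ j • (b ᵥ* P ^ j) + γ ^ (n + 1) • (b ᵥ* P ^ (n + 1)) := by
  induction n with
  | zero => simp [add_comm]
  | succ n ih =>
    rw [sum_range_succ, add_vecMul, smul_add, add_right_comm, ih, smul_vecMul, smul_smul,
      vecMul_vecMul, ← pow_succ, ← pow_succ']

lemma sum_vecMul_pow_nonneg {P : Matrix S S ℝ} (hP : P ∈ rowStochastic ℝ S) {γ : ℝ}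
    (hγ0 : 0 ≤ γ) {b : S → ℝ} (hb : 0 ≤ b) (n : ℕ) :
    0 ≤ ∑ j ∈ range (n + 1), γ ^ j • (b ᵥ* P ^ j) :=
  sum_nonneg fun j _ =>
    smul_nonneg (pow_nonneg hγ0 j) (nonneg_vecMul_of_mem_rowStochastic (pow_mem hP j) hb)

lemma smul_sum_vecMul_pow_vecMul_le {P : Matrix S S ℝ} (hP : P ∈ rowStochastic ℝ S) {γ : ℝ}
    (hγ0 : 0 ≤ γ) {b : S → ℝ} (hb : 0 ≤ b) {n : ℕ}
    (htail : ∀ t, γ ^ (n + 1) * ∑ s, b s ≤ b t) :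
    γ • ((∑ j ∈ range (n + 1), γ ^ j • (b ᵥ* P ^ j)) ᵥ* P) ≤
      ∑ j ∈ range (n + 1), γ ^ j • (b ᵥ* P ^ j) := by
  intro t
  have hrec := congrFun (smul_sum_vecMul_pow_add γ P b n) t
  have hdrop : (b ᵥ* P ^ (n + 1)) t ≤ ∑ s, b s :=
    sum_le_sum fun s _ => mul_le_of_le_one_right (hb s)
      (le_one_of_mem_rowStochastic (pow_mem hP (n + 1)))
  have := mul_le_mul_of_nonneg_left hdrop (pow_nonneg hγ0 (n + 1))
  simp only [Pi.add_apply, Pi.smul_apply, smul_eq_mul] at hrec ⊢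
  linarith [htail t]

lemma mul_diagonal_inv_mul_mul_diagonal_mulVec {K : Type*} [Field K] {d : S → K}
    (hd : ∀ s, d s ≠ 0) (A : Matrix S S K) (x : S → K) (s : S) :
    d s * (((diagonal fun s => (d s)⁻¹) * A * diagonal d) *ᵥ x) s = (A *ᵥ (d * x)) s := by
  rw [← mulVec_mulVec, ← mulVec_mulVec, mulVec_diagonal, ← mul_assoc, mul_inv_cancel₀ (hd s),
    one_mul]
  congr 2
  ext t
  rw [mulVec_diagonal, Pi.mul_apply]

end TruncatedWeight

section WeightedLeastSquares

variable {S ι : Type*} [Fintype S] {F : S → ℝ}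

def weightedSqNorm (F v : S → ℝ) : ℝ := ∑ s, F s * v s ^ 2

def weightedInner (F u v : S → ℝ) : ℝ := ∑ s, F s * (u s * v s)

lemma weightedSqNorm_nonneg (hF : 0 ≤ F) (v : S → ℝ) : 0 ≤ weightedSqNorm F v :=
  sum_nonneg fun s _ => mul_nonneg (hF s) (sq_nonneg _)

lemma weightedSqNorm_add (F u v : S → ℝ) :
    weightedSqNorm F (u + v) =
      weightedSqNorm F u + 2 * weightedInner F u v + weightedSqNorm F v := by
  simp only [weightedSqNorm, weightedInner, mul_sum, ← sum_add_distrib]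
  exact sum_congr rfl fun s _ => by simp only [Pi.add_apply]; ring

lemma weightedSqNorm_smul (F : S → ℝ) (c : ℝ) (v : S → ℝ) :
    weightedSqNorm F (c • v) = c ^ 2 * weightedSqNorm F v := by
  simp only [weightedSqNorm, mul_sum]
  exact sum_congr rfl fun s _ => by simp only [Pi.smul_apply, smul_eq_mul]; ring

lemma weightedInner_smul_left (F : S → ℝ) (c : ℝ) (u v : S → ℝ) :
    weightedInner F (c • u) v = c * weightedInner F u v := by
  simp only [weightedInner, mul_sum]
  exact sum_congr rfl fun s _ => by simp only [Pi.smul_apply, smul_eq_mul]; ring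

lemma weightedInner_sub_right (F u v w : S → ℝ) :
    weightedInner F u (v - w) = weightedInner F u v - weightedInner F u w := by
  simp only [weightedInner, ← sum_sub_distrib]
  exact sum_congr rfl fun s _ => by simp only [Pi.sub_apply]; ring

variable [Fintype ι] {X : Matrix S ι ℝ}

/-- `p = Π_F v`; the minimiser need not be unique. -/
def IsWeightedLeastSquares (F : S → ℝ) (X : Matrix S ι ℝ) (v p : S → ℝ) : Prop :=
  (∃ w, p = X *ᵥ w) ∧ ∀ w, weightedSqNorm F (p - v) ≤ weightedSqNorm F (X *ᵥ w - v)

namespace IsWeightedLeastSquares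

variable {u v p q x : S → ℝ}

/-- `t ↦ ‖p + t X w - v‖²_F` is a quadratic minimal at `t = 0`, so its discriminant vanishes. -/
lemma weightedInner_eq_zero (h : IsWeightedLeastSquares F X v p) (w : ι → ℝ) :
    weightedInner F (X *ᵥ w) (p - v) = 0 := by
  obtain ⟨wp, rfl⟩ := h.1
  have hquad : ∀ t : ℝ, 0 ≤ weightedSqNorm F (X *ᵥ w) * (t * t) +
      2 * weightedInner F (X *ᵥ w) (X *ᵥ wp - v) * t + 0 := by
    intro t
    have hmin := h.2 (wp + t • w)
    rw [show X *ᵥ (wp + t • w) - v = t • X *ᵥ w + (X *ᵥ wp - v) by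
        rw [mulVec_add, mulVec_smul]; abel,
      weightedSqNorm_add, weightedSqNorm_smul, weightedInner_smul_left] at hmin
    linarith
  have := discrim_le_zero hquad
  rw [discrim] at this
  nlinarith

lemma exists_eq_mulVec_sub (h : IsWeightedLeastSquares F X v p) (w : ι → ℝ) :
    ∃ w', X *ᵥ w - p = X *ᵥ w' := by
  obtain ⟨wp, rfl⟩ := h.1
  exact ⟨w - wp, (mulVec_sub X w wp).symm⟩

lemma weightedSqNorm_mulVec_sub (h : IsWeightedLeastSquares F X v p) (w : ι → ℝ) :
    weightedSqNorm F (X *ᵥ w - v) = weightedSqNorm F (X *ᵥ w - p) + weightedSqNorm F (p - v) := by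
  obtain ⟨w', hw'⟩ := h.exists_eq_mulVec_sub w
  rw [← sub_add_sub_cancel _ p, weightedSqNorm_add, hw', h.weightedInner_eq_zero, mul_zero,
    add_zero]

/-- `u - v` splits into `x - q` and a vector orthogonal to the columns. -/
lemma weightedSqNorm_sub_le (hF : 0 ≤ F) (hx : IsWeightedLeastSquares F X u x)
    (hq : IsWeightedLeastSquares F X v q) :
    weightedSqNorm F (x - q) ≤ weightedSqNorm F (u - v) := by
  obtain ⟨wx, rfl⟩ := hx.1
  obtain ⟨w', hw'⟩ := hq.exists_eq_mulVec_sub wx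
  have hsplit : u - v = (X *ᵥ wx - q) + ((q - v) - (X *ᵥ wx - u)) := by abel
  rw [hsplit, weightedSqNorm_add, weightedInner_sub_right, hw', hq.weightedInner_eq_zero,
    hx.weightedInner_eq_zero]
  linarith [weightedSqNorm_nonneg hF ((q - v) - (X *ᵥ wx - u))]

lemma one_sub_mul_weightedSqNorm_le (hF : 0 ≤ F) {γ : ℝ} {T : (S → ℝ) → S → ℝ}
    (hT : ∀ y z, weightedSqNorm F (T y - T z) ≤ γ * weightedSqNorm F (y - z)) (hv : T v = v)
    (hx : IsWeightedLeastSquares F X (T x) x) (hq : IsWeightedLeastSquares F X v q) :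
    (1 - γ) * weightedSqNorm F (x - v) ≤ weightedSqNorm F (q - v) := by
  have hpyth : weightedSqNorm F (x - v) = weightedSqNorm F (x - q) + weightedSqNorm F (q - v) := by
    obtain ⟨wx, rfl⟩ := hx.1
    exact hq.weightedSqNorm_mulVec_sub wx
  have hproj := hx.weightedSqNorm_sub_le hF hq
  have hcontr := hT x v
  rw [hv] at hcontr
  linarith

end IsWeightedLeastSquares

end WeightedLeastSquares

section Contraction

variable {S : Type*} [Fintype S] [DecidableEq S] {P : Matrix S S ℝ} {γ : ℝ}

lemma sq_mulVec_le_mulVec_sq (hP : P ∈ rowStochastic ℝ S) (e : S → ℝ) (s : S) :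
    (P *ᵥ e) s ^ 2 ≤ (P *ᵥ e ^ 2) s :=
  (even_two.convexOn_pow (𝕜 := ℝ)).map_sum_le (fun _ _ => nonneg_of_mem_rowStochastic hP)
    (sum_row_of_mem_rowStochastic hP s) (fun _ _ => Set.mem_univ _)

/-- Jensen: `‖P e‖_F² ≤ F ⬝ (P e²) = (F P) ⬝ e²`. -/
lemma weightedSqNorm_smul_mulVec_le (hP : P ∈ rowStochastic ℝ S) (hγ0 : 0 ≤ γ) {F : S → ℝ}
    (hF : 0 ≤ F) (hFP : γ • (F ᵥ* P) ≤ F) (e : S → ℝ) :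
    weightedSqNorm F (γ • (P *ᵥ e)) ≤ γ * weightedSqNorm F e := by
  have hJensen : weightedSqNorm F (P *ᵥ e) ≤ F ⬝ᵥ (P *ᵥ e ^ 2) :=
    sum_le_sum fun s _ => mul_le_mul_of_nonneg_left (sq_mulVec_le_mulVec_sq hP e s) (hF s)
  have hweight : (γ • (F ᵥ* P)) ⬝ᵥ e ^ 2 ≤ F ⬝ᵥ e ^ 2 :=
    dotProduct_le_dotProduct_of_nonneg_right hFP fun s => sq_nonneg (e s)
  calc weightedSqNorm F (γ • (P *ᵥ e)) = γ ^ 2 * weightedSqNorm F (P *ᵥ e) :=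
        weightedSqNorm_smul F γ _
    _ ≤ γ ^ 2 * (F ⬝ᵥ (P *ᵥ e ^ 2)) := by gcongr
    _ = γ * ((γ • (F ᵥ* P)) ⬝ᵥ e ^ 2) := by
        rw [dotProduct_mulVec, smul_dotProduct, smul_eq_mul]; ring
    _ ≤ γ * (F ⬝ᵥ e ^ 2) := by gcongr
    _ = γ * weightedSqNorm F e := rfl

end Contraction

lemma le_of_forall_le_mulVec_div {S : Type*} [Fintype S] [Nonempty S] {A : Matrix S S ℝ}
    {g : S → ℝ} (hg : ∀ s, 0 < g s) {κ N : ℝ} (hκ : ∀ s, κ ≤ (A *ᵥ g) s / g s)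
    (hN : ∀ s, ∑ t, |A s t| ≤ N) : κ ≤ N := by
  obtain ⟨t, ht⟩ := Finite.exists_max g
  have hAg : (A *ᵥ g) t ≤ N * g t :=
    calc (A *ᵥ g) t ≤ ∑ s, |A t s| * g t :=
          sum_le_sum fun s _ => (mul_le_mul_of_nonneg_right (le_abs_self _) (hg s).le).trans
            (mul_le_mul_of_nonneg_left (ht s) (abs_nonneg _))
      _ = (∑ s, |A t s|) * g t := (sum_mul _ _ _).symm
      _ ≤ N * g t := mul_le_mul_of_nonneg_right (hN t) (hg t).le
  exact (hκ t).trans ((div_le_iff₀ (hg t)).2 hAg)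

lemma mul_le_of_lt_div {x a b c D : ℝ} (hD : 0 < D) (hb : 0 ≤ b) (hc : 0 ≤ c)
    (hab : a * b ≤ D) (hx : x < a * c / D) : x * b ≤ c := by
  have hxD : x * D ≤ a * c := ((lt_div_iff₀ hD).1 hx).le
  refine le_of_mul_le_mul_right ?_ hD
  nlinarith [mul_le_mul_of_nonneg_right hxD hb, mul_le_mul_of_nonneg_left hab hc]

section Emphasis

variable {S : Type} [Fintype S] [DecidableEq S] {d : S → ℝ}

lemma mul_emph_eq (hd : ∀ s, d s ≠ 0) (γ : ℝ) (P : Matrix S S ℝ) (i : S → ℝ) (s : S) :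
    d s * emph γ P d i s = ((1 - γ • Pᵀ)⁻¹ *ᵥ (d * i)) s :=
  mul_diagonal_inv_mul_mul_diagonal_mulVec hd _ i s

lemma mul_truncEmph_eq (hd : ∀ s, d s ≠ 0) (γ : ℝ) (P : Matrix S S ℝ) (i : S → ℝ) (n : ℕ) :
    (fun s => d s * truncEmph γ P d i n s) = ∑ j ∈ range (n + 1), γ ^ j • ((d * i) ᵥ* P ^ j) := by
  ext s
  simp only [truncEmph, mul_sum, Finset.sum_apply, Pi.smul_apply, smul_eq_mul,
    mul_left_comm (d s), mul_diagonal_inv_mul_mul_diagonal_mulVec hd, ← transpose_pow,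
    mulVec_transpose]

variable {P : Matrix S S ℝ} {γ : ℝ} {i : S → ℝ}

lemma mul_le_mul_emph (hP : P ∈ rowStochastic ℝ S) (hγ0 : 0 ≤ γ) (hγ1 : γ < 1)
    (hd : ∀ s, 0 < d s) (hi : ∀ s, 0 < i s) (s : S) :
    d s * i s ≤ d s * emph γ P d i s := by
  rw [mul_emph_eq (fun s => (hd s).ne')]
  exact le_inv_one_sub_smul_transpose_mulVec hP hγ0 hγ1
    (fun s => (mul_pos (hd s) (hi s)).le) s

/-- Uses `κ ≤ ‖I - γ Pᵀ‖_∞` (at a maximiser of `D m`) and `‖D i‖₁ ≤ d_max ‖m‖₁` (as `i ≤ m`). -/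
lemma pow_succ_mul_sum_le_of_lt (hP : P ∈ rowStochastic ℝ S) (hγ0 : 0 ≤ γ) (hγ1 : γ < 1)
    (hd : ∀ s, 0 < d s) (hi : ∀ s, 0 < i s) {dmax dmin κ idmin ninf : ℝ}
    (hdmax : IsGreatest (Set.range d) dmax) (hdmin : IsLeast (Set.range d) dmin)
    (hκ : IsLeast (Set.range fun s => d s * i s / (d s * emph γ P d i s)) κ)
    (hidmin : IsLeast (Set.range fun s => i s * d s) idmin)
    (hninf : IsGreatest (Set.range fun s => ∑ s', |(1 - γ • Pᵀ) s s'|) ninf) {n : ℕ}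
    (hn : γ ^ (n + 1) < κ * dmin * idmin / (dmax ^ 2 * ninf * ∑ s, |emph γ P d i s|))
    (t : S) : γ ^ (n + 1) * ∑ s, d s * i s ≤ d t * i t := by
  have : Nonempty S := ⟨t⟩
  have hdi (s : S) : 0 < d s * i s := mul_pos (hd s) (hi s)
  have hdm (s : S) : 0 < d s * emph γ P d i s :=
    (hdi s).trans_le (mul_le_mul_emph hP hγ0 hγ1 hd hi s)
  have hκ_le : κ ≤ ninf := by
    refine le_of_forall_le_mulVec_div hdm (A := 1 - γ • Pᵀ) (fun s => ?_)
      fun s => hninf.2 ⟨s, rfl⟩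
    have hAg : (1 - γ • Pᵀ) *ᵥ (fun s => d s * emph γ P d i s) = d * i := by
      simp only [mul_emph_eq fun s => (hd s).ne']
      exact one_sub_smul_transpose_mulVec_inv_mulVec hP hγ0 hγ1 _
    rw [hAg]
    exact hκ.2 ⟨s, rfl⟩
  have hκ_pos : 0 < κ := by
    obtain ⟨s, rfl⟩ := hκ.1
    exact div_pos (hdi s) (hdm s)
  obtain ⟨s₁, rfl⟩ := hdmin.1
  have hdmin_le : d s₁ ≤ dmax := hdmax.2 ⟨s₁, rfl⟩
  have hsum : ∑ s, d s * i s ≤ dmax * ∑ s, |emph γ P d i s| := by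
    rw [mul_sum]
    refine sum_le_sum fun s _ => (mul_le_mul_emph hP hγ0 hγ1 hd hi s).trans ?_
    exact (mul_le_mul_of_nonneg_left (le_abs_self _) (hd s).le).trans
      (mul_le_mul_of_nonneg_right (hdmax.2 ⟨s, rfl⟩) (abs_nonneg _))
  have hsum_pos : 0 < ∑ s, d s * i s := sum_pos (fun s _ => hdi s) univ_nonempty
  have hdmax_pos : 0 < dmax := (hd s₁).trans_le hdmin_le
  have hninf_pos : 0 < ninf := hκ_pos.trans_le hκ_le
  have hm_pos : 0 < ∑ s, |emph γ P d i s| :=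
    pos_of_mul_pos_right (hsum_pos.trans_le hsum) hdmax_pos.le
  have hD : 0 < dmax ^ 2 * ninf * ∑ s, |emph γ P d i s| := by positivity
  have hchain : κ * d s₁ * ∑ s, d s * i s ≤ dmax ^ 2 * ninf * ∑ s, |emph γ P d i s| :=
    calc κ * d s₁ * ∑ s, d s * i s ≤ ninf * dmax * (dmax * ∑ s, |emph γ P d i s|) :=
          mul_le_mul (mul_le_mul hκ_le hdmin_le (hd s₁).le hninf_pos.le) hsum hsum_pos.le
            (mul_pos hninf_pos hdmax_pos).le
      _ = dmax ^ 2 * ninf * ∑ s, |emph γ P d i s| := by ring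
  obtain ⟨s₂, rfl⟩ := hidmin.1
  calc γ ^ (n + 1) * ∑ s, d s * i s ≤ i s₂ * d s₂ :=
        mul_le_of_lt_div hD hsum_pos.le (mul_pos (hi s₂) (hd s₂)).le hchain hn
    _ ≤ i t * d t := hidmin.2 ⟨t, rfl⟩
    _ = d t * i t := mul_comm _ _

end Emphasis

lemma sqrt_le_one_div_sqrt_mul_sqrt {a b c : ℝ} (hc : 0 < c) (h : c * a ≤ b) :
    √a ≤ 1 / √c * √b := by
  rw [one_div_mul_eq_div, ← Real.sqrt_div' _ hc.le]
  exact Real.sqrt_le_sqrt ((le_div_iff₀' hc).2 h)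

theorem truncated_etd_fixed_point_performance_general
    {S : Type} [Fintype S] [DecidableEq S] {K : ℕ}
    (γ : ℝ) (hγ0 : 0 ≤ γ) (hγ1 : γ < 1)
    (P : Matrix S S ℝ) (hP0 : ∀ s s', 0 ≤ P s s') (hP1 : ∀ s, ∑ s', P s s' = 1)
    (d : S → ℝ) (hd : ∀ s, 0 < d s)
    (i : S → ℝ) (hi : ∀ s, 0 < i s)
    (dmax dmin : ℝ)
    (hdmax : IsGreatest (Set.range d) dmax) (hdmin : IsLeast (Set.range d) dmin)
    (κ : ℝ)
    (hκ : IsLeast (Set.range fun s => d s * i s / (d s * emph γ P d i s)) κ)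
    (idmin : ℝ)
    (hidmin : IsLeast (Set.range fun s => i s * d s) idmin)
    (ninf : ℝ)
    (hninf : IsGreatest (Set.range fun s => ∑ s', |(1 - γ • Pᵀ) s s'|) ninf)
    (n : ℕ)
    (hn : γ ^ (n + 1) < κ * dmin * idmin / (dmax ^ 2 * ninf * ∑ s, |emph γ P d i s|))
    (X : Matrix S (Fin K) ℝ)
    (rπ : S → ℝ)
    (Proj : (S → ℝ) → (S → ℝ))
    (hProj : ∀ v : S → ℝ,
      (∃ w : Fin K → ℝ, Proj v = X.mulVec w) ∧
      ∀ w : Fin K → ℝ,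
        ∑ s, (d s * truncEmph γ P d i n s) * (Proj v s - v s) ^ 2 ≤
          ∑ s, (d s * truncEmph γ P d i n s) * (X.mulVec w s - v s) ^ 2)
    (wstar : Fin K → ℝ)
    (hfix : Proj (fun s => rπ s + γ * P.mulVec (X.mulVec wstar) s) = X.mulVec wstar) :
    Real.sqrt (∑ s, (d s * truncEmph γ P d i n s) *
        (X.mulVec wstar s - ((1 - γ • P)⁻¹).mulVec rπ s) ^ 2) ≤
      (1 / Real.sqrt (1 - γ)) *
        Real.sqrt (∑ s, (d s * truncEmph γ P d i n s) *
          (Proj (((1 - γ • P)⁻¹).mulVec rπ) s - ((1 - γ • P)⁻¹).mulVec rπ s) ^ 2) := by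
  have hP : P ∈ rowStochastic ℝ S := mem_rowStochastic_iff_sum.2 ⟨hP0, hP1⟩
  set F : S → ℝ := fun s => d s * truncEmph γ P d i n s with hF
  set T : (S → ℝ) → S → ℝ := fun v s => rπ s + γ * (P *ᵥ v) s
  set vπ := (1 - γ • P)⁻¹ *ᵥ rπ
  rw [mul_truncEmph_eq (fun s => (hd s).ne')] at hF
  have hdi : 0 ≤ d * i := fun s => (mul_pos (hd s) (hi s)).le
  have hF0 : 0 ≤ F := hF ▸ sum_vecMul_pow_nonneg hP hγ0 hdi n
  have hFP : γ • (F ᵥ* P) ≤ F := hF ▸ smul_sum_vecMul_pow_vecMul_le hP hγ0 hdi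
    (pow_succ_mul_sum_le_of_lt hP hγ0 hγ1 hd hi hdmax hdmin hκ hidmin hninf hn)
  have hT (x y : S → ℝ) : weightedSqNorm F (T x - T y) ≤ γ * weightedSqNorm F (x - y) := by
    convert weightedSqNorm_smul_mulVec_le hP hγ0 hF0 hFP (x - y) using 2
    ext s
    simp only [T, Pi.sub_apply, Pi.smul_apply, smul_eq_mul, mulVec_sub]
    ring
  have hvπ : T vπ = vπ := by
    have hdet := (isUnit_iff_isUnit_det _).1 (isUnit_one_sub_smul hP hγ0 hγ1)
    have h := one_sub_smul_mulVec P γ vπ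
    rw [mulVec_mulVec, mul_nonsing_inv _ hdet, one_mulVec] at h
    ext s
    simp only [T, h, Pi.sub_apply, Pi.smul_apply, smul_eq_mul, sub_add_cancel]
  have hfix' : IsWeightedLeastSquares F X (T (X *ᵥ wstar)) (X *ᵥ wstar) := by
    have h := hProj (T (X *ᵥ wstar))
    rwa [show Proj (T (X *ᵥ wstar)) = X *ᵥ wstar from hfix] at h
  exact sqrt_le_one_div_sqrt_mul_sqrt (sub_pos.2 hγ1)
    (hfix'.one_sub_mul_weightedSqNorm_le hF0 hT hvπ (hProj vπ))

/-- under the truncation-length condition of Lemma 6, full column rank of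
`X`, and `Π_{f_n} T_π (X w_{*,n}) = X w_{*,n}`, we have
`‖X w_{*,n} − v_π‖_{f_n} ≤ (1/√(1−γ)) ‖Π_{f_n} v_π − v_π‖_{f_n}`,
where `v_π = (I − γP)⁻¹ r_π`. -/
theorem truncated_etd_fixed_point_performance
    {S : Type} [Fintype S] [DecidableEq S] {K : ℕ}
    (γ : ℝ) (hγ0 : 0 ≤ γ) (hγ1 : γ < 1)
    (P : Matrix S S ℝ) (hP0 : ∀ s s', 0 ≤ P s s') (hP1 : ∀ s, ∑ s', P s s' = 1)
    (d : S → ℝ) (hd : ∀ s, 0 < d s) (hdsum : ∑ s, d s = 1)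
    (i : S → ℝ) (hi : ∀ s, 0 < i s)
    (dmax dmin : ℝ)
    (hdmax : IsGreatest (Set.range d) dmax) (hdmin : IsLeast (Set.range d) dmin)
    (κ : ℝ)
    (hκ : IsLeast (Set.range fun s => d s * i s / (d s * emph γ P d i s)) κ)
    (idmin : ℝ)
    (hidmin : IsLeast (Set.range fun s => i s * d s) idmin)
    (ninf : ℝ)
    (hninf : IsGreatest (Set.range fun s => ∑ s', |(1 - γ • Pᵀ) s s'|) ninf)
    (n : ℕ)
    (hn : γ ^ (n + 1) < κ * dmin * idmin / (dmax ^ 2 * ninf * ∑ s, |emph γ P d i s|))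
    (X : Matrix S (Fin K) ℝ) (hX : Function.Injective X.mulVec)
    (rπ : S → ℝ)
    (Proj : (S → ℝ) → (S → ℝ))
    (hProj : ∀ v : S → ℝ,
      (∃ w : Fin K → ℝ, Proj v = X.mulVec w) ∧
      ∀ w : Fin K → ℝ,
        ∑ s, (d s * truncEmph γ P d i n s) * (Proj v s - v s) ^ 2 ≤
          ∑ s, (d s * truncEmph γ P d i n s) * (X.mulVec w s - v s) ^ 2)
    (wstar : Fin K → ℝ)
    (hfix : Proj (fun s => rπ s + γ * P.mulVec (X.mulVec wstar) s) = X.mulVec wstar) :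
    Real.sqrt (∑ s, (d s * truncEmph γ P d i n s) *
        (X.mulVec wstar s - ((1 - γ • P)⁻¹).mulVec rπ s) ^ 2) ≤
      (1 / Real.sqrt (1 - γ)) *
        Real.sqrt (∑ s, (d s * truncEmph γ P d i n s) *
          (Proj (((1 - γ • P)⁻¹).mulVec rπ) s - ((1 - γ • P)⁻¹).mulVec rπ s) ^ 2) :=
  truncated_etd_fixed_point_performance_general γ hγ0 hγ1 P hP0 hP1 d hd i hi dmax dmin hdmax hdmin
    κ hκ idmin hidmin ninf hninf n hn X rπ Proj hProj wstar hfix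

end
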